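/- Let (D, {≺_α, ≻_α}_{α∈Ω}) be a dendriform family algebra and let T := (Ω →₀ D, ⋄) be the associative algebra with total product f ⋄ g := Σ_{α,β} single(αβ)(f(α) ≺_β g(β) + f(α) ≻_α g(β)). Define actions of T on D by f · x := Σ_α f(α) ≻_α x and x · f := Σ_α x ≺_α f(α). Then (i) these actions make D a T-bimodule: (f ⋄ g)·x = f·(g·x), (f·x)·g = f·(x·g), and (x·f)·g = x·(f ⋄ g); (ii) the linear maps R_α : D → T, R_α(x) := single(α)(x), satisfy the relative Rota-Baxter family identity R_α(x) ⋄ R_β(y) = R_{αβ}( R_α(x)·y + x·R_β(y) ) for all x, y ∈ D and α, β ∈ Ω; and (iii) the induced dendriform family structure coincides with the given one: x·R_α(y) = x ≺_α y and R_α(x)·y = x ≻_α y. -/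

import Mathlib

set_option linter.unusedSectionVars false


/- STATEMENT 3: For a dendriform family algebra `(D, {≺_α, ≻_α})`, let
`T = (Ω →₀ D, ⋄)` be the total associative algebra.  Then
(i)   `f · x := Σ_α f α ≻_α x` and `x · f := Σ_α x ≺_α f α` make `D` a `T`-bimodule,
(ii)  `R_α x := single α x` satisfies the relative Rota-Baxter family identity,
(iii) the induced dendriform family structure coincides with the given one. -/

variable {k : Type*} [Field k] [CharZero k]
variable {Ω : Type*} [Semigroup Ω]
variable {D : Type*} [AddCommGroup D] [Module k D]

/-- the total product `f ⋄ g := Σ_{α,β} single (αβ) (f α ≺_β g β + f α ≻_α g β)`. -/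
noncomputable def famTot (prec succ : Ω → D →ₗ[k] D →ₗ[k] D) (f g : Ω →₀ D) : Ω →₀ D :=
  f.sum fun α x => g.sum fun β y => Finsupp.single (α * β) (prec β x y + succ α x y)

/-- the left action `f · x := Σ_α f α ≻_α x` of `Ω →₀ D` on `D`. -/
noncomputable def famLact (succ : Ω → D →ₗ[k] D →ₗ[k] D) (f : Ω →₀ D) (x : D) : D :=
  f.sum fun α y => succ α y x

/-- the right action `x · f := Σ_α x ≺_α f α` of `Ω →₀ D` on `D`. -/
noncomputable def famRact (prec : Ω → D →ₗ[k] D →ₗ[k] D) (x : D) (f : Ω →₀ D) : D :=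
  f.sum fun α y => prec α x y


section Aux
variable (prec succ : Ω → D →ₗ[k] D →ₗ[k] D)

lemma famLact_single (α : Ω) (x y : D) :
    famLact (k:=k) succ (Finsupp.single α x) y = succ α x y := by
  simp [famLact, Finsupp.sum_single_index]

lemma famLact_zero (x : D) : famLact (k:=k) succ 0 x = 0 := by simp [famLact]

lemma famLact_add (f g : Ω →₀ D) (x : D) :
    famLact (k:=k) succ (f + g) x = famLact succ f x + famLact succ g x := by
  unfold famLact
  rw [Finsupp.sum_add_index'] <;> simp

lemma famLact_add₂ (f : Ω →₀ D) (x y : D) :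
    famLact (k:=k) succ f (x + y) = famLact succ f x + famLact succ f y := by
  simp [famLact, Finsupp.sum_add]

lemma famLact_zero₂ (f : Ω →₀ D) : famLact (k:=k) succ f 0 = 0 := by
  simp [famLact]

lemma famRact_single (α : Ω) (x y : D) :
    famRact (k:=k) prec x (Finsupp.single α y) = prec α x y := by
  simp [famRact, Finsupp.sum_single_index]

lemma famRact_zero (x : D) : famRact (k:=k) prec x 0 = 0 := by simp [famRact]

lemma famRact_add (x : D) (f g : Ω →₀ D) :
    famRact (k:=k) prec x (f + g) = famRact prec x f + famRact prec x g := by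
  unfold famRact
  rw [Finsupp.sum_add_index'] <;> simp

lemma famRact_zero₁ (f : Ω →₀ D) : famRact (k:=k) prec 0 f = 0 := by
  simp [famRact]

lemma famRact_add₁ (x y : D) (f : Ω →₀ D) :
    famRact (k:=k) prec (x + y) f = famRact prec x f + famRact prec y f := by
  simp [famRact, Finsupp.sum_add]

lemma famTot_single_single (α β : Ω) (x y : D) :
    famTot (k:=k) prec succ (Finsupp.single α x) (Finsupp.single β y)
      = Finsupp.single (α * β) (prec β x y + succ α x y) := by
  unfold famTot
  rw [Finsupp.sum_single_index, Finsupp.sum_single_index] <;> simp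

lemma famTot_zero_left (g : Ω →₀ D) : famTot (k:=k) prec succ 0 g = 0 := by
  simp [famTot]

lemma famTot_zero_right (f : Ω →₀ D) : famTot (k:=k) prec succ f 0 = 0 := by
  simp [famTot]

lemma famTot_add_left (f g h : Ω →₀ D) :
    famTot (k:=k) prec succ (f + g) h = famTot prec succ f h + famTot prec succ g h := by
  unfold famTot
  rw [Finsupp.sum_add_index']
  · intro a; simp
  · intro a x y
    rw [← Finsupp.sum_add]
    congr 1; ext b z
    rw [← Finsupp.single_add]
    congr 1
    simp only [map_add, LinearMap.add_apply]
    abel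

lemma famTot_add_right (f g h : Ω →₀ D) :
    famTot (k:=k) prec succ f (g + h) = famTot prec succ f g + famTot prec succ f h := by
  unfold famTot
  rw [← Finsupp.sum_add]
  congr 1; ext a x
  rw [Finsupp.sum_add_index']
  · intro b; simp
  · intro b y z
    rw [← Finsupp.single_add]
    congr 1
    simp only [map_add]
    abel

end Aux

theorem dendriform_family_to_relative_RotaBaxter_family
    (prec succ : Ω → D →ₗ[k] D →ₗ[k] D)
    -- dendriform family algebra axioms: `prec α x y = x ≺_α y`, `succ α x y = x ≻_α y`
    (hd1 : ∀ (α β : Ω) (x y z : D),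
      prec β (prec α x y) z = prec (α * β) x (prec β y z + succ α y z))
    (hd2 : ∀ (α β : Ω) (x y z : D),
      prec β (succ α x y) z = succ α x (prec β y z))
    (hd3 : ∀ (α β : Ω) (x y z : D),
      succ (α * β) (prec β x y + succ α x y) z = succ α x (succ β y z)) :
    -- (i) `D` is a bimodule over `(Ω →₀ D, ⋄)`
    ((∀ (f g : Ω →₀ D) (x : D),
        famLact succ (famTot prec succ f g) x = famLact succ f (famLact succ g x)) ∧
     (∀ (f : Ω →₀ D) (x : D) (g : Ω →₀ D),
        famRact prec (famLact succ f x) g = famLact succ f (famRact prec x g)) ∧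
     (∀ (x : D) (f g : Ω →₀ D),
        famRact prec (famRact prec x f) g = famRact prec x (famTot prec succ f g))) ∧
    -- (ii) `R_α x := single α x` is a relative Rota-Baxter family operator
    (∀ (α β : Ω) (x y : D),
      famTot prec succ (Finsupp.single α x) (Finsupp.single β y)
        = Finsupp.single (α * β)
            (famLact succ (Finsupp.single α x) y + famRact prec x (Finsupp.single β y))) ∧
    -- (iii) the induced dendriform family structure is the original one
    ((∀ (α : Ω) (x y : D), famRact prec x (Finsupp.single α y) = prec α x y) ∧
     (∀ (α : Ω) (x y : D), famLact succ (Finsupp.single α x) y = succ α x y)) := by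
  refine ⟨⟨?_, ?_, ?_⟩, ?_, ⟨fun α x y => famRact_single prec α x y,
    fun α x y => famLact_single succ α x y⟩⟩
  · intro f g x
    induction f using Finsupp.induction_linear with
    | zero => simp [famTot_zero_left, famLact_zero]
    | add f₁ f₂ h1 h2 => simp [famTot_add_left, famLact_add, h1, h2]
    | single α a =>
      induction g using Finsupp.induction_linear with
      | zero => simp [famTot_zero_right, famLact_zero, famLact_zero₂]
      | add g₁ g₂ h1 h2 => simp [famTot_add_right, famLact_add, famLact_add₂, h1, h2]
      | single β b =>
        rw [famTot_single_single, famLact_single, famLact_single, famLact_single, hd3]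
  · intro f x g
    induction f using Finsupp.induction_linear with
    | zero => simp [famLact_zero, famRact_zero₁]
    | add f₁ f₂ h1 h2 => simp [famLact_add, famRact_add₁, h1, h2]
    | single α a =>
      induction g using Finsupp.induction_linear with
      | zero => simp [famRact_zero, famLact_zero₂]
      | add g₁ g₂ h1 h2 => simp [famRact_add, famLact_add₂, h1, h2]
      | single β b =>
        rw [famLact_single, famRact_single, famRact_single, famLact_single, hd2]
  · intro x f g
    induction f using Finsupp.induction_linear with
    | zero => simp [famRact_zero, famRact_zero₁, famTot_zero_left]
    | add f₁ f₂ h1 h2 => simp [famRact_add, famRact_add₁, famTot_add_left, h1, h2]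
    | single α a =>
      induction g using Finsupp.induction_linear with
      | zero => simp [famRact_zero, famTot_zero_right]
      | add g₁ g₂ h1 h2 => simp [famRact_add, famTot_add_right, h1, h2]
      | single β b =>
        rw [famRact_single, famRact_single, famTot_single_single, famRact_single, hd1]
  · intro α β x y
    rw [famTot_single_single, famLact_single, famRact_single, add_comm]
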